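/- arXiv:2206.11389 — 2 statements merged into one kernel-verified Lean document; each statement's English description precedes it below -/
import Mathlib

section
/- Let V be a finite-dimensional vector space over a field K, and let F• and F'• be two decreasing filtrations on V of weight w which are opposed, meaning F^p ⊕ F'^{w-p+1} = V for all p. Then the subspaces H^{p,q} := F^p ∩ F'^q with p + q = w give a direct sum decomposition V = ⊕_{p} H^{p, w-p}. -/
/-- Two opposed exhaustive decreasing filtrations of weight `w` on a
finite-dimensional vector space `V` (i.e. `F^p ⊕ F'^{w-p+1} = V` for all `p`) induce
a direct sum decomposition `V = ⊕ₚ H^{p, w-p}` with `H^{p,q} = F^p ∩ F'^q`. -/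
theorem opposed_filtrations_direct_sum
    {K V : Type*} [Field K] [AddCommGroup V] [Module K V] [FiniteDimensional K V]
    (w : ℤ) (F F' : ℤ → Submodule K V)
    (hF : Antitone F) (hF' : Antitone F')
    (hFtop : ∃ a : ℤ, F a = ⊤) (hFbot : ∃ a : ℤ, F a = ⊥)
    (hF'top : ∃ a : ℤ, F' a = ⊤) (hF'bot : ∃ a : ℤ, F' a = ⊥)
    (hopp : ∀ p : ℤ, IsCompl (F p) (F' (w - p + 1))) :
    DirectSum.IsInternal (fun p : ℤ => F p ⊓ F' (w - p)) := by
  rw [DirectSum.isInternal_submodule_iff_iSupIndep_and_iSup_eq_top]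
  have hopp' : ∀ p : ℤ, F (p + 1) ⊓ F' (w - p) = ⊥ := by
    intro p
    have := (hopp (p + 1)).inf_eq_bot
    have he : w - (p + 1) + 1 = w - p := by ring
    rwa [he] at this
  constructor
  · intro p
    have hle : (⨆ q, ⨆ _ : q ≠ p, F q ⊓ F' (w - q)) ≤ F (p + 1) ⊔ F' (w - p + 1) := by
      apply iSup₂_le
      intro q hq
      rcases lt_or_gt_of_ne hq with h | h
      · exact le_trans (le_trans inf_le_right (hF' (by omega))) le_sup_right
      · exact le_trans (le_trans inf_le_left (hF (by omega))) le_sup_left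
    refine Disjoint.mono_right hle ?_
    rw [disjoint_iff, eq_bot_iff]
    intro x hx
    obtain ⟨hxH, hxS⟩ := Submodule.mem_inf.mp hx
    obtain ⟨hxF, hxF'⟩ := Submodule.mem_inf.mp hxH
    obtain ⟨a, ha, b, hb, hab⟩ := Submodule.mem_sup.mp hxS
    have hbF : b ∈ F p := by
      have hba : b = x - a := by rw [← hab]; abel
      rw [hba]
      exact Submodule.sub_mem _ hxF (hF (by omega) ha)
    have hb0 : b = 0 := by
      have hmem : b ∈ F p ⊓ F' (w - p + 1) := ⟨hbF, hb⟩
      rw [(hopp p).inf_eq_bot] at hmem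
      simpa using hmem
    have hxa : x = a := by rw [← hab, hb0, add_zero]
    have hmem : x ∈ F (p + 1) ⊓ F' (w - p) := ⟨hxa ▸ ha, hxF'⟩
    rw [hopp' p] at hmem
    simpa using hmem
  · obtain ⟨a, ha⟩ := hFtop
    obtain ⟨b, hb⟩ := hFbot
    have step : ∀ p : ℤ, F p ≤ (F p ⊓ F' (w - p)) ⊔ F (p + 1) := by
      intro p x hx
      have hsup : F (p + 1) ⊔ F' (w - p) = ⊤ := by
        have := (hopp (p + 1)).sup_eq_top
        have he : w - (p + 1) + 1 = w - p := by ring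
        rwa [he] at this
      have hxmem : x ∈ F (p + 1) ⊔ F' (w - p) := by rw [hsup]; trivial
      obtain ⟨u, hu, v, hv, huv⟩ := Submodule.mem_sup.mp hxmem
      have hvF : v ∈ F p := by
        have hvx : v = x - u := by rw [← huv]; abel
        rw [hvx]
        exact Submodule.sub_mem _ hx (hF (by omega) hu)
      refine Submodule.mem_sup.mpr ⟨v, ⟨hvF, hv⟩, u, hu, by rw [← huv]; abel⟩
    have key : ∀ n : ℕ, F (b - n) ≤ ⨆ q, F q ⊓ F' (w - q) := by
      intro n
      induction n with
      | zero => simp [hb]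
      | succ n ih =>
        refine le_trans (step (b - (n + 1 : ℕ))) (sup_le ?_ ?_)
        · exact le_iSup (fun q => F q ⊓ F' (w - q)) _
        · have he : (b - (n + 1 : ℕ)) + 1 = b - n := by push_cast; ring
          rw [he]; exact ih
    rw [eq_top_iff, ← ha]
    rcases le_or_gt b a with hba | hab
    · calc F a ≤ F b := hF hba
        _ = ⊥ := hb
        _ ≤ _ := bot_le
    · have he : b - ((b - a).toNat : ℤ) = a := by omega
      have := key (b - a).toNat
      rwa [he] at this
end

section
/- Let V be a finite-dimensional vector space over an algebraically closed field K of characteristic ≠ 2 with a non-degenerate symmetric or alternating bilinear form Q, and V = ⊕_p H^{p,w-p} a grading. Let β be the cocharacter acting by z^p (w odd) or z^{p-w/2} (w even) on H^{p,w-p}. If the induced flag F^p = ⊕_{p' ≥ p} H^{p',w-p'} and its opposite F_c both satisfy the polarization relations Q(F^p, F^{w-p+1}) = 0 and Q(F_c^p, F_c^{w-p+1}) = 0, then β(z) preserves Q up to the appropriate scalar; more precisely, for w even, β factors through the group Aut(V, Q) fixing Q. -/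
/-- The decreasing flag induced by a grading: `F^p = ⊕_{p' ≥ p} H^{p', w-p'}`. -/
def flagOf {K V : Type*} [Field K] [AddCommGroup V] [Module K V]
    (H : ℤ → Submodule K V) (p : ℤ) : Submodule K V :=
  ⨆ p' : ℤ, ⨆ _ : p ≤ p', H p'

/-- The opposite (conjugate) flag induced by a grading:
`F_c^q = ⊕_{p' : w - p' ≥ q} H^{p', w-p'}`. -/
def coflagOf {K V : Type*} [Field K] [AddCommGroup V] [Module K V]
    (H : ℤ → Submodule K V) (w q : ℤ) : Submodule K V :=
  ⨆ p' : ℤ, ⨆ _ : p' ≤ w - q, H p'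

lemma mem_flagOf' {K V : Type*} [Field K] [AddCommGroup V] [Module K V]
    (H : ℤ → Submodule K V) {p p' : ℤ} (h : p' ≤ p) {v : V} (hv : v ∈ H p) :
    v ∈ flagOf H p' := by
  apply Submodule.mem_iSup_of_mem p
  exact Submodule.mem_iSup_of_mem h hv

lemma mem_coflagOf' {K V : Type*} [Field K] [AddCommGroup V] [Module K V]
    (H : ℤ → Submodule K V) {w q p : ℤ} (h : p ≤ w - q) {v : V} (hv : v ∈ H p) :
    v ∈ coflagOf H w q := by
  apply Submodule.mem_iSup_of_mem p
  exact Submodule.mem_iSup_of_mem h hv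

/-- Let `V = ⊕ₚ H^{p,w-p}` be graded, `Q` a non-degenerate symmetric or
alternating form over an algebraically closed field of characteristic ≠ 2, `w` even,
and `β` the cocharacter acting by `z^{p-w/2}` on `H^{p,w-p}`. If the flag
`F^p = ⊕_{p' ≥ p} H^{p'}` and its opposite `F_c` both satisfy the polarization
relations `Q(F^p, F^{w-p+1}) = 0` and `Q(F_c^p, F_c^{w-p+1}) = 0`, then `β` fixes `Q`,
i.e. `β` factors through `Aut(V, Q)`. -/
theorem cocharacter_fixes_polarization
    {K V : Type*} [Field K] [IsAlgClosed K] [AddCommGroup V] [Module K V]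
    [FiniteDimensional K V]
    (hchar : (2 : K) ≠ 0)
    (w : ℤ) (hw : Even w)
    (H : ℤ → Submodule K V) (hH : DirectSum.IsInternal H)
    (Q : V →ₗ[K] V →ₗ[K] K)
    (hQnd : ∀ v : V, (∀ u : V, Q v u = 0) → v = 0)
    (hQsym : (∀ v u : V, Q v u = Q u v) ∨ (∀ v : V, Q v v = 0))
    (β : Kˣ →* (Module.End K V)ˣ)
    (hβ : ∀ (z : Kˣ) (p : ℤ), ∀ v ∈ H p,
      ((β z : Module.End K V)) v = ((z ^ (p - w / 2) : Kˣ) : K) • v)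
    (hpol : ∀ p : ℤ, ∀ v ∈ flagOf H p, ∀ u ∈ flagOf H (w - p + 1), Q v u = 0)
    (hpolc : ∀ p : ℤ, ∀ v ∈ coflagOf H w p, ∀ u ∈ coflagOf H w (w - p + 1), Q v u = 0) :
    ∀ (z : Kˣ) (v u : V),
      Q ((β z : Module.End K V) v) ((β z : Module.End K V) u) = Q v u := by
  intro z v u
  obtain ⟨k, hk⟩ := hw
  have hdiv : w / 2 = k := by omega
  -- core computation on graded pieces
  have key : ∀ p : ℤ, ∀ v ∈ H p, ∀ q : ℤ, ∀ u ∈ H q,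
      Q ((β z : Module.End K V) v) ((β z : Module.End K V) u) = Q v u := by
    intro p v hv q u hu
    rw [hβ z p v hv, hβ z q u hu]
    simp only [map_smul, LinearMap.smul_apply, smul_eq_mul]
    rw [← mul_assoc, ← Units.val_mul, ← zpow_add]
    rcases eq_or_ne (p + q) w with hpq | hpq
    · have : q - w / 2 + (p - w / 2) = 0 := by omega
      rw [this, zpow_zero, Units.val_one, one_mul]
    · have hzero : Q v u = 0 := by
        rcases lt_or_gt_of_ne hpq with hlt | hgt
        · exact hpolc (w - p) v (mem_coflagOf' H (by omega) hv)
            u (mem_coflagOf' H (by omega) hu)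
        · exact hpol p v (mem_flagOf' H le_rfl hv) u (mem_flagOf' H (by omega) hu)
      rw [hzero, mul_zero]
  -- extend by bilinearity
  have htop : ⨆ p, H p = ⊤ := hH.submodule_iSup_eq_top
  have hv' : v ∈ ⨆ p, H p := htop ▸ Submodule.mem_top
  have hu' : u ∈ ⨆ p, H p := htop ▸ Submodule.mem_top
  induction hv' using Submodule.iSup_induction' with
  | mem p v hv =>
    induction hu' using Submodule.iSup_induction' with
    | mem q u hu => exact key p v hv q u hu
    | zero => simp
    | add u₁ _ u₂ _ h1 h2 => simp only [map_add, h1, h2]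
  | zero => simp
  | add v₁ _ v₂ _ h1 h2 => simp only [map_add, LinearMap.add_apply, h1, h2]
end
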